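/- arXiv:1403.2254 — 4 statements merged into one kernel-verified Lean document; each statement's English description precedes it below -/
import Mathlib

section
/- Let Q be a semiautomorphic IP loop and let a ∈ C(Q). Then for all x ∈ Q the translation maps satisfy P_a L_x R_a L_x⁻¹ = L_x R_a L_x⁻¹ P_a, where P_a = L_a R_a and maps are composed left to right. -/
/-- A loop structure on a type with multiplication and identity element:
the equations `a * x = b` and `y * a = b` have unique solutions, and `1` is a
two-sided identity. -/
structure IsLoop (Q : Type*) [Mul Q] [One Q] : Prop where
  exUnique_left : ∀ a b : Q, ∃! x : Q, a * x = b
  exUnique_right : ∀ a b : Q, ∃! y : Q, y * a = b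
  one_mul : ∀ x : Q, 1 * x = x
  mul_one : ∀ x : Q, x * 1 = x

/-- Flexibility: `(xy)x = x(yx)`. -/
def Flex (Q : Type*) [Mul Q] : Prop := ∀ x y : Q, (x * y) * x = x * (y * x)

/-- The inverse property: `x⁻¹(xy) = y` and `(yx)x⁻¹ = y`. -/
def IsIP (Q : Type*) [Mul Q] [Inv Q] : Prop :=
  ∀ x y : Q, x⁻¹ * (x * y) = y ∧ (y * x) * x⁻¹ = y

/-- A semiautomorphism: `1θ = 1` and `(x·y·x)θ = xθ·yθ·xθ`. -/
def IsSemiautomorphism (Q : Type*) [Mul Q] [One Q] (θ : Q → Q) : Prop :=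
  θ 1 = 1 ∧ ∀ x y : Q, θ ((x * y) * x) = (θ x * θ y) * θ x

/-- The set of left and right translations, as permutations. -/
def translations (Q : Type*) [Mul Q] : Set (Equiv.Perm Q) :=
  {π : Equiv.Perm Q | (∃ x : Q, ∀ y : Q, π y = x * y) ∨ (∃ x : Q, ∀ y : Q, π y = y * x)}

/-- An inner mapping: an element of the multiplication group (the group generated by
all translations) fixing `1`. -/
def IsInnerMapping (Q : Type*) [Mul Q] [One Q] (θ : Equiv.Perm Q) : Prop :=
  θ ∈ Subgroup.closure (translations Q) ∧ θ 1 = 1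

/-- A semiautomorphic IP loop: a flexible IP loop in which every inner mapping is a
semiautomorphism. -/
structure IsSAIPLoop (Q : Type*) [Mul Q] [One Q] [Inv Q] : Prop where
  toIsLoop : IsLoop Q
  flexible : Flex Q
  ip : IsIP Q
  inner_semi : ∀ θ : Equiv.Perm Q, IsInnerMapping Q θ → IsSemiautomorphism Q ⇑θ

/-- The commutant `C(Q)`. -/
def commutant (Q : Type*) [Mul Q] : Set Q := {a : Q | ∀ x : Q, a * x = x * a}

/-- The center `Z(Q)`: elements commuting with every element and associating with
every pair of elements. -/
def loopCenter (Q : Type*) [Mul Q] : Set Q :=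
  {a : Q | (∀ x : Q, a * x = x * a) ∧ (∀ x y : Q, a * (x * y) = (a * x) * y) ∧
    (∀ x y : Q, x * (a * y) = (x * a) * y) ∧ (∀ x y : Q, x * (y * a) = (x * y) * a)}

/-!
With `T = L_x R_a L_x⁻¹`, the inner mapping `θ = T R_a⁻¹` satisfies `θ(aya) = θa · θy · θa`. The
inner mapping `R_a⁻¹ T` fixes both `1` and `a`, hence also `a·1·a = a²`, which says `T a = a²`, i.e.
`θ a = a`. So `T(aya) = θ(aya) a = ((a·θy)·a)·a`, and flexibility turns this into
`(a·(θy·a))·a = P_a(T y)`.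
-/

namespace IsIP

variable {Q : Type*} [Mul Q] [Inv Q]

theorem inv_mul_cancel_left (hIP : IsIP Q) (x y : Q) : x⁻¹ * (x * y) = y := (hIP x y).1

theorem mul_inv_cancel_right (hIP : IsIP Q) (x y : Q) : y * x * x⁻¹ = y := (hIP x y).2

variable [One Q]

theorem mul_inv_self (hIP : IsIP Q) (hL : IsLoop Q) (x : Q) : x * x⁻¹ = 1 := by
  simpa only [hL.one_mul] using hIP.mul_inv_cancel_right x 1

theorem inv_mul_self (hIP : IsIP Q) (hL : IsLoop Q) (x : Q) : x⁻¹ * x = 1 := by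
  simpa only [hL.mul_one] using hIP.inv_mul_cancel_left x 1

theorem inv_inv (hIP : IsIP Q) (hL : IsLoop Q) (x : Q) : x⁻¹⁻¹ = x := by
  simpa only [hIP.inv_mul_self hL, hL.mul_one] using hIP.inv_mul_cancel_left x⁻¹ x

theorem mul_inv_cancel_left (hIP : IsIP Q) (hL : IsLoop Q) (x y : Q) : x * (x⁻¹ * y) = y := by
  simpa only [hIP.inv_inv hL] using hIP.inv_mul_cancel_left x⁻¹ y

theorem inv_mul_cancel_right (hIP : IsIP Q) (hL : IsLoop Q) (x y : Q) : y * x⁻¹ * x = y := by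
  simpa only [hIP.inv_inv hL] using hIP.mul_inv_cancel_right x⁻¹ y

def leftMul (hIP : IsIP Q) (hL : IsLoop Q) (x : Q) : Equiv.Perm Q where
  toFun := (x * ·)
  invFun := (x⁻¹ * ·)
  left_inv := hIP.inv_mul_cancel_left x
  right_inv := hIP.mul_inv_cancel_left hL x

def rightMul (hIP : IsIP Q) (hL : IsLoop Q) (x : Q) : Equiv.Perm Q where
  toFun := (· * x)
  invFun := (· * x⁻¹)
  left_inv := hIP.mul_inv_cancel_right x
  right_inv := hIP.inv_mul_cancel_right hL x

theorem leftMul_mem_closure (hIP : IsIP Q) (hL : IsLoop Q) (x : Q) :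
    hIP.leftMul hL x ∈ Subgroup.closure (translations Q) :=
  Subgroup.subset_closure (Or.inl ⟨x, fun _ ↦ rfl⟩)

theorem rightMul_mem_closure (hIP : IsIP Q) (hL : IsLoop Q) (x : Q) :
    hIP.rightMul hL x ∈ Subgroup.closure (translations Q) :=
  Subgroup.subset_closure (Or.inr ⟨x, fun _ ↦ rfl⟩)

end IsIP

theorem IsSemiautomorphism.map_mul_self {Q : Type*} [Mul Q] [One Q] {θ : Q → Q}
    (hθ : IsSemiautomorphism Q θ) (hL : IsLoop Q) {a : Q} (ha : θ a = a) :
    θ (a * a) = a * a := by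
  simpa only [hL.mul_one, ha, hθ.1] using hθ.2 a 1

namespace IsSAIPLoop

variable {Q : Type*} [Mul Q] [One Q] [Inv Q]

theorem isSemiautomorphism_conj_mul_inv_right (hQ : IsSAIPLoop Q) (x a : Q) :
    IsSemiautomorphism Q (fun y ↦ x⁻¹ * (x * (y * a⁻¹) * a)) := by
  obtain ⟨hL, -, hIP, hsemi⟩ := hQ
  have hLx := hIP.leftMul_mem_closure hL x
  have hRa := hIP.rightMul_mem_closure hL a
  refine hsemi ((hIP.leftMul hL x)⁻¹ * hIP.rightMul hL a * hIP.leftMul hL x *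
    (hIP.rightMul hL a)⁻¹) ⟨mul_mem (mul_mem (mul_mem (inv_mem hLx) hRa) hLx) (inv_mem hRa), ?_⟩
  change x⁻¹ * (x * (1 * a⁻¹) * a) = 1
  rw [hL.one_mul, hIP.inv_mul_cancel_right hL, hIP.inv_mul_self hL]

theorem isSemiautomorphism_conj_mul_right_mul_inv (hQ : IsSAIPLoop Q) (x a : Q) :
    IsSemiautomorphism Q (fun y ↦ x⁻¹ * (x * y * a) * a⁻¹) := by
  obtain ⟨hL, -, hIP, hsemi⟩ := hQ
  have hLx := hIP.leftMul_mem_closure hL x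
  have hRa := hIP.rightMul_mem_closure hL a
  refine hsemi ((hIP.rightMul hL a)⁻¹ * ((hIP.leftMul hL x)⁻¹ * hIP.rightMul hL a *
    hIP.leftMul hL x)) ⟨mul_mem (inv_mem hRa) (mul_mem (mul_mem (inv_mem hLx) hRa) hLx), ?_⟩
  change x⁻¹ * (x * 1 * a) * a⁻¹ = 1
  rw [hL.mul_one, hIP.inv_mul_cancel_left, hIP.mul_inv_self hL]

theorem inv_mul_mul_mul_self (hQ : IsSAIPLoop Q) (x a : Q) : x⁻¹ * (x * a * a) = a * a := by
  have hfix : x⁻¹ * (x * (a * a⁻¹) * a) = a := by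
    rw [hQ.ip.mul_inv_self hQ.toIsLoop, hQ.toIsLoop.mul_one, hQ.ip.inv_mul_cancel_left]
  have h := (hQ.isSemiautomorphism_conj_mul_inv_right x a).map_mul_self hQ.toIsLoop hfix
  rwa [hQ.ip.mul_inv_cancel_right] at h

theorem conj_mul_right_sandwich (hQ : IsSAIPLoop Q) (x a y : Q) :
    x⁻¹ * (x * (a * y * a) * a) = a * (x⁻¹ * (x * y * a)) * a := by
  set θ : Q → Q := fun z ↦ x⁻¹ * (x * z * a) * a⁻¹
  have hθ : IsSemiautomorphism Q θ := hQ.isSemiautomorphism_conj_mul_right_mul_inv x a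
  have hθa : θ a = a := by
    simp only [θ]
    rw [hQ.inv_mul_mul_mul_self, hQ.ip.mul_inv_cancel_right]
  have hT (z : Q) : x⁻¹ * (x * z * a) = θ z * a :=
    (hQ.ip.inv_mul_cancel_right hQ.toIsLoop a _).symm
  calc x⁻¹ * (x * (a * y * a) * a) = a * θ y * a * a := by rw [hT, hθ.2, hθa]
    _ = a * (θ y * a) * a := by rw [hQ.flexible]
    _ = a * (x⁻¹ * (x * y * a)) * a := by rw [hT]

end IsSAIPLoop

theorem stmt4_general (Q : Type*) [Mul Q] [One Q] [Inv Q] (hQ : IsSAIPLoop Q)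
    (a : Q) (x : Q)
    (Lx Ra Pa : Equiv.Perm Q)
    (hLx : ∀ y : Q, Lx y = x * y) (hRa : ∀ y : Q, Ra y = y * a)
    (hPa : ∀ y : Q, Pa y = (a * y) * a) :
    Lx⁻¹ * Ra * Lx * Pa = Pa * Lx⁻¹ * Ra * Lx := by
  have hLx_inv (z : Q) : Lx⁻¹ z = x⁻¹ * z :=
    Equiv.Perm.inv_eq_iff_eq.2 (by rw [hLx, hQ.ip.mul_inv_cancel_left hQ.toIsLoop])
  ext y
  simp only [Equiv.Perm.mul_apply, hLx, hRa, hPa, hLx_inv]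
  exact hQ.conj_mul_right_sandwich x a y

/-- In a semiautomorphic IP loop, for `a ∈ C(Q)` and any `x`,
`P_a L_x R_a L_x⁻¹ = L_x R_a L_x⁻¹ P_a` (maps composed left to right). -/
theorem stmt4 (Q : Type*) [Mul Q] [One Q] [Inv Q] (hQ : IsSAIPLoop Q)
    (a : Q) (ha : a ∈ commutant Q) (x : Q)
    (Lx Ra Pa : Equiv.Perm Q)
    (hLx : ∀ y : Q, Lx y = x * y) (hRa : ∀ y : Q, Ra y = y * a)
    (hPa : ∀ y : Q, Pa y = (a * y) * a) :
    Lx⁻¹ * Ra * Lx * Pa = Pa * Lx⁻¹ * Ra * Lx :=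
  stmt4_general Q hQ a x Lx Ra Pa hLx hRa hPa
end

section
/- Let Q be an IP loop and let * : Q → Q be a bijection such that gg* ∈ Z(Q) for every g ∈ Q. Then for all g,h ∈ Q: (i) g·(hh*) = (gh)·h*; (ii) (gg*)·h = g·(g*h); and (iii) (g(hh*))·g* = (gh)·(h*g*). -/
/-! The inverse property alone lets `x⁻¹` undo `x` on both sides and makes inversion
antimultiplicative. Writing `g* = g⁻¹ c` with `c = gg*` central, each identity reduces to
cancelling `x` against `x⁻¹` after moving the central factors out of the way. -/

section InverseProperty

variable {Q : Type*} [Mul Q] [Inv Q]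

theorem IsIP.inv_mul_cancel_left_s15 (hQ : IsIP Q) (x y : Q) : x⁻¹ * (x * y) = y :=
  (hQ x y).1

theorem IsIP.mul_inv_cancel_right_s15 (hQ : IsIP Q) (x y : Q) : y * x * x⁻¹ = y :=
  (hQ x y).2

/-- `L_{x⁻¹}` has the left inverse `L_{x⁻¹⁻¹}` and the right inverse `L_x`, so these agree. -/
theorem IsIP.mul_inv_cancel_left_s15 (hQ : IsIP Q) (x y : Q) : x * (x⁻¹ * y) = y :=
  calc x * (x⁻¹ * y)
      = x⁻¹⁻¹ * (x⁻¹ * (x * (x⁻¹ * y))) := (hQ.inv_mul_cancel_left_s15 x⁻¹ _).symm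
    _ = y := by rw [hQ.inv_mul_cancel_left_s15 x, hQ.inv_mul_cancel_left_s15 x⁻¹]

theorem IsIP.mul_inv_rev (hQ : IsIP Q) (x y : Q) : (x * y)⁻¹ = y⁻¹ * x⁻¹ := by
  have h : (x * y)⁻¹ * x = y⁻¹ := by
    simpa only [hQ.mul_inv_cancel_right_s15] using hQ.inv_mul_cancel_left_s15 (x * y) y⁻¹
  rw [← h, hQ.mul_inv_cancel_right_s15]

end InverseProperty

section Center

variable {Q : Type*} [Mul Q] {a b : Q}

theorem mul_mul_mul_comm_of_mem_loopCenter (ha : a ∈ loopCenter Q) (hb : b ∈ loopCenter Q)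
    (x y : Q) : x * a * (y * b) = x * y * (a * b) := by
  obtain ⟨ha_comm, -, ha_mid, ha_right⟩ := ha
  obtain ⟨-, -, -, hb_right⟩ := hb
  rw [hb_right, ← ha_mid, ha_comm y, ha_right, ← hb_right]

variable [Inv Q]

theorem IsIP.mul_mul_inv_mul_cancel_of_mem_loopCenter (hQ : IsIP Q) (ha : a ∈ loopCenter Q)
    (x y : Q) : x * y * (y⁻¹ * a) = x * a := by
  rw [ha.2.2.2, hQ.mul_inv_cancel_right_s15]

theorem IsIP.mul_inv_mul_mul_cancel_of_mem_loopCenter (hQ : IsIP Q) (ha : a ∈ loopCenter Q)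
    (x y : Q) : x * (x⁻¹ * a * y) = a * y := by
  rw [← ha.2.2.1, hQ.mul_inv_cancel_left_s15]

theorem IsIP.mul_mul_inv_mul_of_mem_loopCenter (hQ : IsIP Q) (ha : a ∈ loopCenter Q)
    (hb : b ∈ loopCenter Q) (x : Q) : x * a * (x⁻¹ * b) = a * b := by
  rw [hb.2.2.2, ← ha.1 x, hQ.mul_inv_cancel_right_s15]

theorem IsIP.mul_mul_mul_inv_mul_of_mem_loopCenter (hQ : IsIP Q)
    (ha : a ∈ loopCenter Q) (hb : b ∈ loopCenter Q) (x y : Q) :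
    x * y * (y⁻¹ * a * (x⁻¹ * b)) = a * b := by
  rw [mul_mul_mul_comm_of_mem_loopCenter ha hb, ← hQ.mul_inv_rev, hQ.mul_inv_cancel_left_s15]

end Center

theorem stmt15_general (Q : Type*) [Mul Q] [Inv Q] (hIP : IsIP Q)
    (st : Q → Q)
    (hZ : ∀ g : Q, g * st g ∈ loopCenter Q) :
    ∀ g h : Q,
      g * (h * st h) = (g * h) * st h ∧
      (g * st g) * h = g * (st g * h) ∧
      (g * (h * st h)) * st g = (g * h) * (st h * st g) := by
  intro g h
  have central_factor (x : Q) : ∃ c ∈ loopCenter Q, st x = x⁻¹ * c :=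
    ⟨x * st x, hZ x, (hIP.inv_mul_cancel_left_s15 x (st x)).symm⟩
  obtain ⟨c, hc, hst_h⟩ := central_factor h
  obtain ⟨d, hd, hst_g⟩ := central_factor g
  simp only [hst_h, hst_g, hIP.mul_inv_cancel_left_s15]
  refine ⟨(hIP.mul_mul_inv_mul_cancel_of_mem_loopCenter hc g h).symm,
    (hIP.mul_inv_mul_mul_cancel_of_mem_loopCenter hd g h).symm, ?_⟩
  rw [hIP.mul_mul_inv_mul_of_mem_loopCenter hc hd,
    hIP.mul_mul_mul_inv_mul_of_mem_loopCenter hc hd]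

/-- If `Q` is an IP loop and `* : Q → Q` is a bijection with
`gg* ∈ Z(Q)` for all `g`, then `g·(hh*) = (gh)·h*`, `(gg*)·h = g·(g*h)`, and
`(g(hh*))·g* = (gh)·(h*g*)`. -/
theorem stmt15 (Q : Type*) [Mul Q] [One Q] [Inv Q] (hQ : IsLoop Q) (hIP : IsIP Q)
    (st : Q → Q) (hbij : Function.Bijective st)
    (hZ : ∀ g : Q, g * st g ∈ loopCenter Q) :
    ∀ g h : Q,
      g * (h * st h) = (g * h) * st h ∧
      (g * st g) * h = g * (st g * h) ∧
      (g * (h * st h)) * st g = (g * h) * (st h * st g) :=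
  stmt15_general Q hIP st hZ
end

section
/- Let Q be a semiautomorphic IP loop, g₀ ∈ Z(Q), and * an involutory antiautomorphism of Q such that g₀* = g₀ and gg* ∈ Z(Q) for every g ∈ Q. For an indeterminate t, define multiplication ∘ on the disjoint union Q ∪ Qt by: g∘h = gh, g∘(ht) = (gh)t, (gt)∘h = (h*g)t, and (gt)∘(ht) = g₀ g h*. Then (Q ∪ Qt, ∘) is a semiautomorphic IP loop. -/
/-!
The doubling is an IP loop, with `(gt)⁻¹ = (g₀⁻¹(g*)⁻¹)t`, and flexible, by direct
computation. Each of its translations acts on the two copies of `Q` by elements of the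
multiplication group `Mlt(Q)`, possibly after exchanging the copies and applying `*` to
both; such maps form a group. So an inner mapping, which fixes `1 ∈ Q`, acts as
`g ↦ A g, gt ↦ (B g)t` or as `g ↦ A g*, gt ↦ (B g*)t`, with `A` inner in `Q` and
`B ∈ Mlt(Q)`. The norm `N g = gg*`, `N (gt) = g₀ gg*` is multiplicative with central values,
hence invariant under inner mappings, and this gives `N (B 1) = 1`. The semiautomorphism
identity is then checked on the four combinations of copies; the one non-formal case
reduces, writing `B = L_{B 1} Ψ` with `Ψ` inner, to the identity
`d(aba) = ((da)(bd⁻¹))(da)`, which holds in every semiautomorphic IP loop.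
-/

open Equiv

structure IsIPLoop (Q : Type*) [Mul Q] [One Q] [Inv Q] : Prop where
  one_mul : ∀ x : Q, 1 * x = x
  mul_one : ∀ x : Q, x * 1 = x
  inv_mul_cancel_left : ∀ x y : Q, x⁻¹ * (x * y) = y
  mul_inv_cancel_right : ∀ x y : Q, y * x * x⁻¹ = y

namespace IsIPLoop

variable {Q : Type*} [Mul Q] [One Q] [Inv Q] (hQ : IsIPLoop Q)
include hQ

theorem mul_left_cancel {a x y : Q} (h : a * x = a * y) : x = y := by
  rw [← hQ.inv_mul_cancel_left a x, h, hQ.inv_mul_cancel_left]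

theorem mul_right_cancel {a x y : Q} (h : x * a = y * a) : x = y := by
  rw [← hQ.mul_inv_cancel_right a x, h, hQ.mul_inv_cancel_right]

theorem mul_inv_cancel (x : Q) : x * x⁻¹ = 1 := by
  simpa only [hQ.one_mul] using hQ.mul_inv_cancel_right x 1

theorem inv_mul_cancel (x : Q) : x⁻¹ * x = 1 := by
  simpa only [hQ.mul_one] using hQ.inv_mul_cancel_left x 1

theorem inv_eq_of_mul_eq_one_right {a b : Q} (h : a * b = 1) : a⁻¹ = b := by
  rw [← hQ.inv_mul_cancel_left a b, h, hQ.mul_one]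

theorem inv_eq_of_mul_eq_one_left {a b : Q} (h : a * b = 1) : b⁻¹ = a := by
  rw [← hQ.mul_inv_cancel_right b a, h, hQ.one_mul]

theorem inv_inv (x : Q) : x⁻¹⁻¹ = x :=
  hQ.inv_eq_of_mul_eq_one_left (hQ.mul_inv_cancel x)

theorem mul_inv_cancel_left (x y : Q) : x * (x⁻¹ * y) = y := by
  simpa only [hQ.inv_inv] using hQ.inv_mul_cancel_left x⁻¹ y

theorem inv_mul_cancel_right (x y : Q) : y * x⁻¹ * x = y := by
  simpa only [hQ.inv_inv] using hQ.mul_inv_cancel_right x⁻¹ y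

theorem mul_inv_rev (x y : Q) : (x * y)⁻¹ = y⁻¹ * x⁻¹ := by
  have h : y * (x * y)⁻¹ = x⁻¹ := by
    simpa only [hQ.inv_mul_cancel_left] using hQ.mul_inv_cancel_right (x * y) x⁻¹
  rw [← h, hQ.inv_mul_cancel_left]

theorem isLoop : IsLoop Q where
  exUnique_left a b := ⟨a⁻¹ * b, hQ.mul_inv_cancel_left a b,
    fun x hx => by rw [← hx, hQ.inv_mul_cancel_left]⟩
  exUnique_right a b := ⟨b * a⁻¹, hQ.inv_mul_cancel_right a b,
    fun y hy => by rw [← hy, hQ.mul_inv_cancel_right]⟩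
  one_mul := hQ.one_mul
  mul_one := hQ.mul_one

end IsIPLoop

theorem IsSAIPLoop.isIPLoop {Q : Type*} [Mul Q] [One Q] [Inv Q] (hQ : IsSAIPLoop Q) :
    IsIPLoop Q :=
  ⟨hQ.toIsLoop.one_mul, hQ.toIsLoop.mul_one, fun x y => (hQ.ip x y).1,
    fun x y => (hQ.ip x y).2⟩

namespace loopCenter

variable {Q : Type*} [Mul Q] {a : Q} (ha : a ∈ loopCenter Q)
include ha

theorem mul_comm (x : Q) : a * x = x * a := ha.1 x

theorem mul_assoc (x y : Q) : a * x * y = a * (x * y) := (ha.2.1 x y).symm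

theorem mul_left_comm (x y : Q) : x * (a * y) = a * (x * y) := by
  rw [ha.2.2.1, ← ha.1, ← ha.2.1]

theorem mul_right_comm (x y : Q) : x * a * y = a * (x * y) := by
  rw [← ha.1, mul_assoc ha]

theorem mul_mul_left (x y : Q) : x * (y * a) = a * (x * y) := by
  rw [ha.2.2.2, ← ha.1]

theorem mul_mem {b : Q} (hb : b ∈ loopCenter Q) : a * b ∈ loopCenter Q := by
  refine ⟨fun x => ?_, fun x y => ?_, fun x y => ?_, fun x y => ?_⟩
  · rw [mul_assoc ha b x, hb.1 x, ← mul_left_comm ha x b]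
  · rw [mul_assoc ha b (x * y), ← mul_assoc hb x y, mul_assoc ha b x, mul_assoc ha (b * x) y]
  · rw [mul_assoc ha b y, mul_left_comm ha x (b * y), mul_left_comm hb x y,
      mul_left_comm ha x b, mul_assoc ha (x * b) y, mul_right_comm hb x y]
  · rw [mul_left_comm ha y b, mul_left_comm ha x (y * b), mul_mul_left hb x y,
      mul_left_comm ha (x * y) b, ← mul_comm hb (x * y)]

theorem inv_mem [One Q] [Inv Q] (hQ : IsIPLoop Q) : a⁻¹ ∈ loopCenter Q := by
  have cancel : ∀ x y : Q, a * x = a * y → x = y := fun _ _ => hQ.mul_left_cancel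
  refine ⟨fun x => cancel _ _ ?_, fun x y => cancel _ _ ?_, fun x y => cancel _ _ ?_,
    fun x y => cancel _ _ ?_⟩
  · rw [hQ.mul_inv_cancel_left, ← mul_left_comm ha x a⁻¹, hQ.mul_inv_cancel, hQ.mul_one]
  · rw [hQ.mul_inv_cancel_left, ← mul_assoc ha, hQ.mul_inv_cancel_left]
  · rw [← mul_left_comm ha x (a⁻¹ * y), hQ.mul_inv_cancel_left, ← mul_assoc ha,
      ← mul_left_comm ha x a⁻¹, hQ.mul_inv_cancel, hQ.mul_one]
  · rw [← mul_left_comm ha x, ← mul_left_comm ha y, ← mul_left_comm ha (x * y),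
      hQ.mul_inv_cancel, hQ.mul_one, hQ.mul_one]

end loopCenter

def starNorm {Q : Type*} [Mul Q] (st : Q → Q) (g : Q) : Q := g * st g

structure IsCentralInvolution {Q : Type*} [Mul Q] (st : Q → Q) : Prop where
  map_mul : ∀ g h : Q, st (g * h) = st h * st g
  involutive : Function.Involutive st
  norm_mem : ∀ g : Q, starNorm st g ∈ loopCenter Q

namespace IsCentralInvolution

variable {Q : Type*} [Mul Q] {st : Q → Q} (hst : IsCentralInvolution st)
include hst

local notation "N" => starNorm st

theorem star_norm (x : Q) : st (N x) = N x := by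
  rw [starNorm, hst.map_mul, hst.involutive]

variable [One Q] [Inv Q]

theorem map_one (hQ : IsIPLoop Q) : st 1 = 1 :=
  hQ.mul_left_cancel (a := st 1) (by rw [← hst.map_mul, hQ.one_mul, hQ.mul_one])

theorem map_inv (hQ : IsIPLoop Q) (x : Q) : st x⁻¹ = (st x)⁻¹ := by
  refine (hQ.inv_eq_of_mul_eq_one_left ?_).symm
  rw [← hst.map_mul, hQ.mul_inv_cancel, hst.map_one hQ]

theorem eq_norm_mul_inv (hQ : IsIPLoop Q) (x : Q) : st x = N x * x⁻¹ := by
  rw [loopCenter.mul_comm (hst.norm_mem x), starNorm, hQ.inv_mul_cancel_left]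

theorem star_mul_self (hQ : IsIPLoop Q) (x : Q) : st x * x = N x := by
  rw [hst.eq_norm_mul_inv hQ x, hQ.inv_mul_cancel_right]

theorem norm_star (hQ : IsIPLoop Q) (x : Q) : N (st x) = N x := by
  rw [starNorm, hst.involutive, hst.star_mul_self hQ]

theorem norm_one (hQ : IsIPLoop Q) : N 1 = 1 := by
  rw [starNorm, hst.map_one hQ, hQ.mul_one]

theorem norm_mul (hQ : IsIPLoop Q) (x y : Q) : N (x * y) = N x * N y := by
  have hx := hst.norm_mem x
  have hy := hst.norm_mem y
  rw [starNorm, hst.map_mul, hst.eq_norm_mul_inv hQ x, hst.eq_norm_mul_inv hQ y,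
    loopCenter.mul_assoc hy, loopCenter.mul_left_comm hy, loopCenter.mul_left_comm hx,
    loopCenter.mul_left_comm hx, ← hQ.mul_inv_rev, hQ.mul_inv_cancel, hQ.mul_one,
    loopCenter.mul_comm hy]

theorem star_mul_mul (hQ : IsIPLoop Q) (x y : Q) : st x * (x * y) = N x * y := by
  rw [hst.eq_norm_mul_inv hQ x, loopCenter.mul_assoc (hst.norm_mem x), hQ.inv_mul_cancel_left]

theorem mul_mul_star (hQ : IsIPLoop Q) (x y : Q) : y * x * st x = N x * y := by
  rw [hst.eq_norm_mul_inv hQ x, loopCenter.mul_left_comm (hst.norm_mem x),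
    hQ.mul_inv_cancel_right]

theorem mul_star_mul (hQ : IsIPLoop Q) (x y : Q) : x * (st x * y) = N x * y := by
  rw [hst.eq_norm_mul_inv hQ x, loopCenter.mul_assoc (hst.norm_mem x),
    loopCenter.mul_left_comm (hst.norm_mem x), hQ.mul_inv_cancel_left]

end IsCentralInvolution

def multGroup (Q : Type*) [Mul Q] : Subgroup (Perm Q) := Subgroup.closure (translations Q)

namespace IsIPLoop

variable {Q : Type*} [Mul Q] [One Q] [Inv Q] (hQ : IsIPLoop Q)

def leftMul (g : Q) : Perm Q :=
  ⟨(g * ·), (g⁻¹ * ·), hQ.inv_mul_cancel_left g, hQ.mul_inv_cancel_left g⟩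

def rightMul (g : Q) : Perm Q :=
  ⟨(· * g), (· * g⁻¹), fun y => hQ.mul_inv_cancel_right g y,
    fun y => hQ.inv_mul_cancel_right g y⟩

theorem leftMul_mem (g : Q) : hQ.leftMul g ∈ multGroup Q :=
  Subgroup.subset_closure (Or.inl ⟨g, fun _ => rfl⟩)

theorem rightMul_mem (g : Q) : hQ.rightMul g ∈ multGroup Q :=
  Subgroup.subset_closure (Or.inr ⟨g, fun _ => rfl⟩)

end IsIPLoop

namespace multGroup

variable {Q : Type*} [Mul Q]

theorem apply_center_mul {θ : Perm Q} (hθ : θ ∈ multGroup Q) {a : Q} (ha : a ∈ loopCenter Q)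
    (v : Q) : θ (a * v) = a * θ v := by
  induction hθ using Subgroup.closure_induction generalizing v with
  | mem τ hτ =>
    rcases hτ with ⟨x, hx⟩ | ⟨x, hx⟩
    · rw [hx, hx, loopCenter.mul_left_comm ha]
    · rw [hx, hx, loopCenter.mul_assoc ha]
  | one => rfl
  | mul θ φ _ _ hθ hφ => rw [Perm.mul_apply, Perm.mul_apply, hφ, hθ]
  | inv θ _ hθ =>
    rw [Perm.inv_eq_iff_eq, hθ]
    simp only [Perm.coe_inv, Equiv.apply_symm_apply]

theorem centralHom_apply {M : Type*} [Mul M] [One M] (hM : IsLoop M) [One Q] [Inv Q]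
    (hQ : IsIPLoop Q) {N : M → Q} (hN : ∀ x y, N (x * y) = N x * N y)
    (hNc : ∀ x, N x ∈ loopCenter Q) {θ : Perm M} (hθ : θ ∈ multGroup M) (v : M) :
    N (θ v) = N (θ 1) * N v := by
  have hN1 : N 1 = 1 :=
    hQ.mul_left_cancel (a := N 1) (by rw [← hN, hM.one_mul, hQ.mul_one])
  induction hθ using Subgroup.closure_induction generalizing v with
  | mem τ hτ =>
    rcases hτ with ⟨x, hx⟩ | ⟨x, hx⟩
    · rw [hx, hx, hM.mul_one, hN]
    · rw [hx, hx, hM.one_mul, hN, loopCenter.mul_comm (hNc x)]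
  | one => rw [Perm.one_apply, Perm.one_apply, hN1, hQ.one_mul]
  | mul θ φ _ _ hθ hφ =>
    rw [Perm.mul_apply, Perm.mul_apply, hθ, hφ, hθ (φ 1), loopCenter.mul_assoc (hNc _)]
  | inv θ _ hθ =>
    have key : ∀ w, N (θ⁻¹ w) = (N (θ 1))⁻¹ * N w := fun w => by
      rw [← hQ.inv_mul_cancel_left (N (θ 1)) (N (θ⁻¹ w)), ← hθ]
      simp only [Perm.coe_inv, Equiv.apply_symm_apply]
    rw [key, key, hN1, hQ.mul_one]

theorem starNorm_apply [One Q] [Inv Q] {st : Q → Q} (hQ : IsIPLoop Q)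
    (hst : IsCentralInvolution st) {B : Perm Q} (hB : B ∈ multGroup Q)
    (hB1 : starNorm st (B 1) = 1) (x : Q) : starNorm st (B x) = starNorm st x := by
  rw [centralHom_apply hQ.isLoop hQ (hst.norm_mul hQ) hst.norm_mem hB, hB1, hQ.one_mul]

end multGroup

theorem conj_mem_multGroup {Q : Type*} [Mul Q] {st : Q → Q}
    (hmul : ∀ g h : Q, st (g * h) = st h * st g) (hinv : Function.Involutive st)
    {θ : Perm Q} (hθ : θ ∈ multGroup Q) :
    hinv.toPerm st * θ * hinv.toPerm st ∈ multGroup Q := by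
  suffices multGroup Q ≤ (multGroup Q).comap (MulAut.conj (hinv.toPerm st)).toMonoidHom by
    simpa only [Subgroup.mem_comap, MulEquiv.coe_toMonoidHom, MulAut.conj_apply, Perm.inv_def,
      Function.Involutive.toPerm_symm] using this hθ
  refine Subgroup.closure_le _ |>.2 fun τ hτ => Subgroup.subset_closure ?_
  have conj : ∀ y, ((MulAut.conj (hinv.toPerm st)).toMonoidHom τ) y = st (τ (st y)) :=
    fun _ => rfl
  rcases hτ with ⟨x, hx⟩ | ⟨x, hx⟩
  · exact Or.inr ⟨st x, fun y => by rw [conj, hx, hmul, hinv]⟩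
  · exact Or.inl ⟨st x, fun y => by rw [conj, hx, hmul, hinv]⟩

theorem IsSemiautomorphism.map_inv {Q : Type*} [Mul Q] [One Q] [Inv Q] (hQ : IsIPLoop Q)
    {T : Q → Q} (hT : IsSemiautomorphism Q T) (x : Q) : T x⁻¹ = (T x)⁻¹ := by
  have h := hT.2 x x⁻¹
  rw [hQ.mul_inv_cancel, hQ.one_mul] at h
  refine (hQ.inv_eq_of_mul_eq_one_right (hQ.mul_right_cancel (a := T x) ?_)).symm
  rw [← h, hQ.one_mul]

namespace IsInnerMapping

variable {Q : Type*} [Mul Q] [One Q] [Inv Q] {st : Q → Q} {θ : Perm Q}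
  (hθ : IsInnerMapping Q θ)
include hθ

theorem starNorm_apply (hQ : IsIPLoop Q) (hst : IsCentralInvolution st) (x : Q) :
    starNorm st (θ x) = starNorm st x :=
  multGroup.starNorm_apply hQ hst hθ.1 (by rw [hθ.2, hst.norm_one hQ]) x

theorem apply_star (hQ : IsSAIPLoop Q) (hst : IsCentralInvolution st) (x : Q) :
    θ (st x) = st (θ x) := by
  rw [hst.eq_norm_mul_inv hQ.isIPLoop, multGroup.apply_center_mul hθ.1 (hst.norm_mem x),
    (hQ.inner_semi θ hθ).map_inv hQ.isIPLoop, hst.eq_norm_mul_inv hQ.isIPLoop,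
    hθ.starNorm_apply hQ.isIPLoop hst]

end IsInnerMapping

theorem IsSAIPLoop.mul_sandwich {Q : Type*} [Mul Q] [One Q] [Inv Q] (hQ : IsSAIPLoop Q)
    (d a b : Q) : d * (a * b * a) = d * a * (b * d⁻¹) * (d * a) := by
  have hI := hQ.isIPLoop
  let θ : Perm Q := (hI.rightMul (d * a))⁻¹ * hI.rightMul a * hI.rightMul d
  have hθ : ∀ u, θ u = u * d * a * (d * a)⁻¹ := fun u => rfl
  have hinner : IsInnerMapping Q θ :=
    ⟨mul_mem (mul_mem (inv_mem (hI.rightMul_mem _)) (hI.rightMul_mem a)) (hI.rightMul_mem d),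
      by rw [hθ, hI.one_mul, hI.mul_inv_cancel]⟩
  have hsemi := hQ.inner_semi θ hinner
  have hfix : θ (d * a) = d * a := by
    have h : θ (d * a)⁻¹ = (d * a)⁻¹ := by
      rw [hθ, hI.mul_inv_rev d a, hI.inv_mul_cancel_right, hI.inv_mul_cancel, hI.one_mul]
    rw [← hI.inv_inv (d * a), hsemi.map_inv hI, h]
  have hshift : ∀ u, θ (d * (a * u)) = d * a * u := fun u => by
    have h := hsemi.map_inv hI (d * (a * u))
    rw [hI.mul_inv_rev, hI.mul_inv_rev, hθ, hI.inv_mul_cancel_right, hI.inv_mul_cancel_right,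
      ← hI.mul_inv_rev] at h
    rw [← hI.inv_inv (θ _), ← h, hI.inv_inv]
  have hz : θ (b * d⁻¹) * (d * a) = b * a := by
    rw [hθ, hI.inv_mul_cancel_right, hI.inv_mul_cancel_right]
  apply θ.injective
  rw [hQ.flexible, ← hz, hshift, ← hQ.flexible, hsemi.2, hfix]

theorem multGroup.apply_sandwich {Q : Type*} [Mul Q] [One Q] [Inv Q] {st : Q → Q}
    (hQ : IsSAIPLoop Q) (hst : IsCentralInvolution st)
    {B : Perm Q} (hB : B ∈ multGroup Q) (hB1 : starNorm st (B 1) = 1) (a b : Q) :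
    B (a * st b * a) = B a * st (B b) * B a := by
  have hI := hQ.isIPLoop
  obtain ⟨Ψ, hΨ, hBΨ⟩ : ∃ Ψ, IsInnerMapping Q Ψ ∧ ∀ v, B v = B 1 * Ψ v :=
    ⟨(hI.leftMul (B 1))⁻¹ * B,
      ⟨mul_mem (inv_mem (hI.leftMul_mem _)) hB, hI.inv_mul_cancel _⟩,
      fun v => (hI.mul_inv_cancel_left _ _).symm⟩
  have hstar : st (B 1) = (B 1)⁻¹ := by rw [hst.eq_norm_mul_inv hI, hB1, hI.one_mul]
  rw [hBΨ (a * st b * a), hBΨ a, hBΨ b, (hQ.inner_semi Ψ hΨ).2, hΨ.apply_star hQ hst,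
    hQ.mul_sandwich, hst.map_mul, hstar]

section Graded

variable {α : Type*} (s : Perm α)

def twist (i j : Bool) : Perm (α ⊕ α) :=
  (bif i then Equiv.sumComm α α else 1) * (bif j then Perm.sumCongr s s else 1)

variable {s} (hs : Function.Involutive s)
include hs

theorem twist_mul_twist (i j i' j' : Bool) :
    twist s i j * twist s i' j' = twist s (i ^^ i') (j ^^ j') := by
  ext x
  cases i <;> cases j <;> cases i' <;> cases j' <;> rcases x with x | x <;> simp [twist, hs x]

theorem twist_mul_self (i j : Bool) : twist s i j * twist s i j = 1 := by
  rw [twist_mul_twist hs, Bool.xor_self, Bool.xor_self]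
  rfl

variable {H : Subgroup (Perm α)} (hH : ∀ A ∈ H, s * A * s ∈ H)
include hH

theorem twist_mul_sumCongr (i j : Bool) {A B : Perm α} (hA : A ∈ H) (hB : B ∈ H) :
    ∃ A' ∈ H, ∃ B' ∈ H,
      twist s i j * Perm.sumCongr A B = Perm.sumCongr A' B' * twist s i j := by
  cases i <;> cases j
  · exact ⟨A, hA, B, hB, by ext (x | x) <;> simp [twist]⟩
  · exact ⟨_, hH A hA, _, hH B hB, by ext (x | x) <;> simp [twist, hs _]⟩
  · exact ⟨B, hB, A, hA, by ext (x | x) <;> simp [twist]⟩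
  · exact ⟨_, hH B hB, _, hH A hA, by ext (x | x) <;> simp [twist, hs _]⟩

def gradedSubgroup : Subgroup (Perm (α ⊕ α)) where
  carrier := {T | ∃ A ∈ H, ∃ B ∈ H, ∃ i j, T = Perm.sumCongr A B * twist s i j}
  one_mem' := ⟨1, H.one_mem, 1, H.one_mem, false, false, by ext (x | x) <;> simp [twist]⟩
  mul_mem' := by
    rintro _ _ ⟨A, hA, B, hB, i, j, rfl⟩ ⟨A', hA', B', hB', i', j', rfl⟩
    obtain ⟨A'', hA'', B'', hB'', h⟩ := twist_mul_sumCongr hs hH i j hA' hB'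
    refine ⟨A * A'', H.mul_mem hA hA'', B * B'', H.mul_mem hB hB'', i ^^ i', j ^^ j', ?_⟩
    rw [← twist_mul_twist hs, ← Perm.sumCongr_mul, mul_assoc, ← mul_assoc (twist s i j), h]
    simp only [mul_assoc]
  inv_mem' := by
    rintro _ ⟨A, hA, B, hB, i, j, rfl⟩
    obtain ⟨A', hA', B', hB', h⟩ := twist_mul_sumCongr hs hH i j (H.inv_mem hA) (H.inv_mem hB)
    refine ⟨A', hA', B', hB', i, j, ?_⟩
    rw [mul_inv_rev, Perm.sumCongr_inv, inv_eq_of_mul_eq_one_left (twist_mul_self hs i j), h]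

end Graded

/-- The doubling `Q ∪ Qt`: `inl g` stands for `g` and `inr g` for `gt`; the parameters
only serve to carry the multiplication as an instance. -/
def Doubling {Q : Type*} (_g₀ : Q) (_st : Q → Q) : Type _ := Q ⊕ Q

namespace Doubling

variable {Q : Type*} {g₀ : Q} {st : Q → Q}

section Mul

variable [Mul Q]

variable (g₀ st) in
def mul' : Q ⊕ Q → Q ⊕ Q → Q ⊕ Q
  | .inl g, .inl h => .inl (g * h)
  | .inl g, .inr h => .inr (g * h)
  | .inr g, .inl h => .inr (st h * g)
  | .inr g, .inr h => .inl (g₀ * (g * st h))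

instance : Mul (Doubling g₀ st) := ⟨mul' g₀ st⟩

abbrev inl (g : Q) : Doubling g₀ st := Sum.inl g
abbrev inr (g : Q) : Doubling g₀ st := Sum.inr g

theorem inl_mul_inl (g h : Q) : (inl g : Doubling g₀ st) * inl h = inl (g * h) := rfl
theorem inl_mul_inr (g h : Q) : (inl g : Doubling g₀ st) * inr h = inr (g * h) := rfl
theorem inr_mul_inl (g h : Q) : (inr g : Doubling g₀ st) * inl h = inr (st h * g) := rfl
theorem inr_mul_inr (g h : Q) : (inr g : Doubling g₀ st) * inr h = inl (g₀ * (g * st h)) := rfl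

variable [Inv Q]

variable (g₀ st) in
def inv' : Q ⊕ Q → Q ⊕ Q
  | .inl g => .inl g⁻¹
  | .inr g => .inr (g₀⁻¹ * (st g)⁻¹)

instance : Inv (Doubling g₀ st) := ⟨inv' g₀ st⟩

theorem inv_inl (g : Q) : (inl g : Doubling g₀ st)⁻¹ = inl g⁻¹ := rfl
theorem inv_inr (g : Q) : (inr g : Doubling g₀ st)⁻¹ = inr (g₀⁻¹ * (st g)⁻¹) := rfl

end Mul

instance [One Q] : One (Doubling g₀ st) := ⟨Sum.inl 1⟩

theorem one_def [One Q] : (1 : Doubling g₀ st) = inl 1 := rfl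

section Loop

variable [Mul Q] [One Q] [Inv Q] (hQ : IsIPLoop Q) (hst : IsCentralInvolution st)
include hQ hst

theorem star_inv_mul_inv (hg₀st : st g₀ = g₀) (g : Q) :
    st (g₀⁻¹ * (st g)⁻¹) = g⁻¹ * g₀⁻¹ := by
  rw [hst.map_mul, hst.map_inv hQ, hst.map_inv hQ, hst.involutive, hg₀st]

theorem isIPLoop (hg₀ : g₀ ∈ loopCenter Q) (hg₀st : st g₀ = g₀) :
    IsIPLoop (Doubling g₀ st) := by
  have hg₀' := loopCenter.inv_mem hg₀ hQ
  refine ⟨?_, ?_, ?_, ?_⟩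
  · rintro (x | x)
    · exact congrArg Sum.inl (hQ.one_mul x)
    · exact congrArg Sum.inr (hQ.one_mul x)
  · rintro (x | x)
    · exact congrArg Sum.inl (hQ.mul_one x)
    · rw [one_def, inr_mul_inl, hst.map_one hQ, hQ.one_mul]
  · rintro (g | g) (h | h)
    · rw [inl_mul_inl, inv_inl, inl_mul_inl, hQ.inv_mul_cancel_left]
    · rw [inl_mul_inr, inv_inl, inl_mul_inr, hQ.inv_mul_cancel_left]
    · rw [inr_mul_inl, inv_inr, inr_mul_inr, hst.map_mul, hst.involutive,
        loopCenter.mul_assoc hg₀', hQ.inv_mul_cancel_left, hQ.mul_inv_cancel_left]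
    · rw [inr_mul_inr, inv_inr, inr_mul_inl, hst.map_mul, hst.map_mul, hst.involutive, hg₀st,
        ← loopCenter.mul_comm hg₀, loopCenter.mul_assoc hg₀, loopCenter.mul_left_comm hg₀',
        hQ.mul_inv_cancel_right, hQ.mul_inv_cancel_left]
  · rintro (g | g) (h | h)
    · rw [inl_mul_inl, inv_inl, inl_mul_inl, hQ.mul_inv_cancel_right]
    · rw [inr_mul_inl, inv_inl, inr_mul_inl, hst.map_inv hQ, hQ.inv_mul_cancel_left]
    · rw [inl_mul_inr, inv_inr, inr_mul_inr, star_inv_mul_inv hQ hst hg₀st,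
        loopCenter.mul_mul_left hg₀', hQ.mul_inv_cancel_right, hQ.mul_inv_cancel_left]
    · rw [inr_mul_inr, inv_inr, inl_mul_inr, loopCenter.mul_assoc hg₀,
        loopCenter.mul_left_comm hg₀', hQ.mul_inv_cancel_right, hQ.mul_inv_cancel_left]

end Loop

section Norm

variable [Mul Q]

-- `t ∘ t = g₀`, so `t` has norm `g₀`.
variable (g₀ st) in
def norm (x : Doubling g₀ st) : Q := Sum.elim (starNorm st) (g₀ * starNorm st ·) x

theorem norm_mem (hst : IsCentralInvolution st) (hg₀ : g₀ ∈ loopCenter Q)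
    (x : Doubling g₀ st) : norm g₀ st x ∈ loopCenter Q := by
  rcases x with g | g
  · exact hst.norm_mem g
  · exact loopCenter.mul_mem hg₀ (hst.norm_mem g)

variable [One Q] [Inv Q] (hQ : IsIPLoop Q) (hst : IsCentralInvolution st)
include hQ hst

theorem flex (hflex : Flex Q) (hg₀ : g₀ ∈ loopCenter Q) (hg₀st : st g₀ = g₀) :
    Flex (Doubling g₀ st) := by
  rintro (g | g) (h | h)
  · rw [inl_mul_inl, inl_mul_inl, inl_mul_inl, inl_mul_inl, hflex]
  · rw [inl_mul_inr, inr_mul_inl, inr_mul_inl, inl_mul_inr, hst.star_mul_mul hQ,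
      hst.mul_star_mul hQ]
  · rw [inr_mul_inl, inr_mul_inr, inl_mul_inr, inr_mul_inr, hst.mul_mul_star hQ, hst.map_mul,
      hst.mul_star_mul hQ]
  · rw [inr_mul_inr, inl_mul_inr, inr_mul_inr, inr_mul_inl, hst.map_mul, hst.map_mul,
      hst.involutive, hg₀st, loopCenter.mul_comm hg₀]

theorem norm_mul (hg₀ : g₀ ∈ loopCenter Q) (hg₀st : st g₀ = g₀)
    (x y : Doubling g₀ st) :
    norm g₀ st (x * y) = norm g₀ st x * norm g₀ st y := by
  rcases x with g | g <;> rcases y with h | h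
  · exact hst.norm_mul hQ g h
  · show g₀ * starNorm st (g * h) = starNorm st g * (g₀ * starNorm st h)
    rw [hst.norm_mul hQ, loopCenter.mul_left_comm hg₀]
  · show g₀ * starNorm st (st h * g) = g₀ * starNorm st g * starNorm st h
    rw [hst.norm_mul hQ, hst.norm_star hQ, loopCenter.mul_assoc hg₀,
      loopCenter.mul_comm (hst.norm_mem h)]
  · show starNorm st (g₀ * (g * st h)) = g₀ * starNorm st g * (g₀ * starNorm st h)
    rw [hst.norm_mul hQ, hst.norm_mul hQ, hst.norm_star hQ, starNorm, hg₀st,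
      loopCenter.mul_assoc hg₀, loopCenter.mul_assoc hg₀,
      loopCenter.mul_left_comm hg₀ (starNorm st g)]

end Norm

section Graded

variable [Mul Q] [One Q] [Inv Q]

def gradedMultGroup (hst : IsCentralInvolution st) : Subgroup (Perm (Q ⊕ Q)) :=
  gradedSubgroup (s := hst.involutive.toPerm st) hst.involutive
    (fun _ => conj_mem_multGroup hst.map_mul hst.involutive)

theorem multGroup_le_gradedMultGroup (hQ : IsIPLoop Q) (hst : IsCentralInvolution st) :
    multGroup (Doubling g₀ st) ≤ gradedMultGroup hst := by
  refine Subgroup.closure_le _ |>.2 fun τ hτ => ?_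
  rcases hτ with ⟨x | x, hx⟩ | ⟨x | x, hx⟩
  · refine ⟨_, hQ.leftMul_mem x, _, hQ.leftMul_mem x, false, false, ?_⟩
    ext (y | y) <;> exact hx _
  · refine ⟨_, mul_mem (hQ.leftMul_mem g₀) (hQ.leftMul_mem x), _, hQ.rightMul_mem x,
      true, true, ?_⟩
    ext (y | y) <;> exact hx _
  · refine ⟨_, hQ.rightMul_mem x, _, hQ.leftMul_mem (st x), false, false, ?_⟩
    ext (y | y) <;> exact hx _
  · refine ⟨_, mul_mem (hQ.leftMul_mem g₀) (hQ.rightMul_mem (st x)), _, hQ.rightMul_mem x,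
      true, false, ?_⟩
    ext (y | y) <;> exact hx _

end Graded

section Components

variable [Mul Q] [One Q] [Inv Q] (hQ : IsSAIPLoop Q)
  (hst : IsCentralInvolution st) (hg₀ : g₀ ∈ loopCenter Q) {A B : Perm Q}
  (hA : IsInnerMapping Q A) (hB : B ∈ multGroup Q) (hB1 : starNorm st (B 1) = 1)
  {T : Doubling g₀ st → Doubling g₀ st}
include hQ hst hg₀ hA hB hB1

theorem isSemiautomorphism_of_even (hTl : ∀ u, T (inl u) = inl (A u))
    (hTr : ∀ u, T (inr u) = inr (B u)) : IsSemiautomorphism (Doubling g₀ st) T := by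
  have hI := hQ.isIPLoop
  refine ⟨by rw [one_def, hTl, hA.2], ?_⟩
  rintro (a | a) (b | b)
  · rw [inl_mul_inl, inl_mul_inl, hTl, hTl, hTl, inl_mul_inl, inl_mul_inl,
      (hQ.inner_semi A hA).2]
  · rw [inl_mul_inr, inr_mul_inl, hTl, hTr, hTr, inl_mul_inr, inr_mul_inl, hst.star_mul_mul hI,
      hst.star_mul_mul hI, multGroup.apply_center_mul hB (hst.norm_mem a),
      hA.starNorm_apply hI hst]
  · rw [inr_mul_inl, inr_mul_inr, hTr, hTl, hTl, inr_mul_inl, inr_mul_inr, hst.mul_mul_star hI,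
      hst.mul_mul_star hI, multGroup.apply_center_mul hA.1 hg₀,
      multGroup.apply_center_mul hA.1 (hst.norm_mem a), hA.apply_star hQ hst,
      multGroup.starNorm_apply hI hst hB hB1]
  · rw [inr_mul_inr, inl_mul_inr, hTr, hTr, hTr, inr_mul_inr, inl_mul_inr,
      loopCenter.mul_assoc hg₀, loopCenter.mul_assoc hg₀, multGroup.apply_center_mul hB hg₀,
      multGroup.apply_sandwich hQ hst hB hB1]

theorem isSemiautomorphism_of_odd (hg₀st : st g₀ = g₀)
    (hTl : ∀ u, T (inl u) = inl (A (st u))) (hTr : ∀ u, T (inr u) = inr (B (st u))) :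
    IsSemiautomorphism (Doubling g₀ st) T := by
  have hI := hQ.isIPLoop
  refine ⟨by rw [one_def, hTl, hst.map_one hI, hA.2], ?_⟩
  rintro (a | a) (b | b)
  · rw [inl_mul_inl, inl_mul_inl, hTl, hTl, hTl, inl_mul_inl, inl_mul_inl, hst.map_mul,
      hst.map_mul, ← hQ.flexible, (hQ.inner_semi A hA).2]
  · rw [inl_mul_inr, inr_mul_inl, hTr, hTl, hTr, inl_mul_inr, inr_mul_inl, hst.star_mul_mul hI,
      hst.star_mul_mul hI, hst.map_mul, hst.star_norm, ← loopCenter.mul_comm (hst.norm_mem a),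
      multGroup.apply_center_mul hB (hst.norm_mem a), hA.starNorm_apply hI hst, hst.norm_star hI]
  · rw [inr_mul_inl, inr_mul_inr, hTl, hTr, hTl, inr_mul_inl, inr_mul_inr, hst.mul_mul_star hI,
      hst.mul_mul_star hI, hst.map_mul, hst.map_mul, hst.involutive, hg₀st, hst.star_norm,
      ← loopCenter.mul_comm hg₀, ← loopCenter.mul_comm (hst.norm_mem a),
      multGroup.apply_center_mul hA.1 hg₀, multGroup.apply_center_mul hA.1 (hst.norm_mem a),
      hA.apply_star hQ hst, hst.involutive, multGroup.starNorm_apply hI hst hB hB1,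
      hst.norm_star hI]
  · have h := multGroup.apply_sandwich hQ hst hB hB1 (st a) (st b)
    rw [hst.involutive] at h
    rw [inr_mul_inr, inl_mul_inr, hTr, hTr, hTr, inr_mul_inr, inl_mul_inr,
      loopCenter.mul_assoc hg₀, loopCenter.mul_assoc hg₀, hst.map_mul, hg₀st,
      ← loopCenter.mul_comm hg₀, hst.map_mul, hst.map_mul, hst.involutive, ← hQ.flexible,
      multGroup.apply_center_mul hB hg₀, h]

end Components

variable [Mul Q] [One Q] [Inv Q] (hQ : IsSAIPLoop Q)
  (hst : IsCentralInvolution st) (hg₀ : g₀ ∈ loopCenter Q) (hg₀st : st g₀ = g₀)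
include hQ hst hg₀ hg₀st

theorem starNorm_eq_one_of_isInnerMapping {θ : Perm (Doubling g₀ st)}
    (hθ : IsInnerMapping (Doubling g₀ st) θ) {b : Q} (hb : θ (inr 1) = inr b) :
    starNorm st b = 1 := by
  have hI := hQ.isIPLoop
  have hN := multGroup.centralHom_apply (isIPLoop hI hst hg₀ hg₀st).isLoop hI
    (norm_mul hI hst hg₀ hg₀st) (norm_mem hst hg₀) hθ.1 (inr 1)
  rw [hb, hθ.2] at hN
  change g₀ * starNorm st b = starNorm st 1 * (g₀ * starNorm st 1) at hN
  rw [hst.norm_one hI, hI.one_mul] at hN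
  exact hI.mul_left_cancel hN

theorem isSemiautomorphism_of_isInnerMapping {θ : Perm (Doubling g₀ st)}
    (hθ : IsInnerMapping (Doubling g₀ st) θ) : IsSemiautomorphism (Doubling g₀ st) θ := by
  have hI := hQ.isIPLoop
  obtain ⟨A, hA, B, hB, i, j, hθAB⟩ := multGroup_le_gradedMultGroup hI hst hθ.1
  have happly : ∀ x, θ x = (Perm.sumCongr A B * twist (hst.involutive.toPerm st) i j) x :=
    fun x => congrArg (· x) hθAB
  have hθ1 :
      (Perm.sumCongr A B * twist (hst.involutive.toPerm st) i j) (Sum.inl 1) = Sum.inl 1 :=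
    (happly _).symm.trans hθ.2
  obtain rfl : i = false := by
    cases i
    · rfl
    · cases j <;> simp [twist] at hθ1
  have hA1 : A 1 = 1 := by cases j <;> simpa [twist, hst.map_one hI] using hθ1
  have hB1 : starNorm st (B 1) = 1 := by
    refine starNorm_eq_one_of_isInnerMapping hQ hst hg₀ hg₀st hθ ?_
    cases j
    · exact happly _
    · exact (happly _).trans (congrArg (fun v => inr (B v)) (hst.map_one hI))
  cases j
  · exact isSemiautomorphism_of_even hQ hst hg₀ ⟨hA, hA1⟩ hB hB1 (fun u => happly (inl u))
      (fun u => happly (inr u))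
  · exact isSemiautomorphism_of_odd hQ hst hg₀ ⟨hA, hA1⟩ hB hB1 hg₀st
      (fun u => happly (inl u)) (fun u => happly (inr u))

theorem isSAIPLoop : IsSAIPLoop (Doubling g₀ st) where
  toIsLoop := (isIPLoop hQ.isIPLoop hst hg₀ hg₀st).isLoop
  flexible := flex hQ.isIPLoop hst hQ.flexible hg₀ hg₀st
  ip x y := ⟨(isIPLoop hQ.isIPLoop hst hg₀ hg₀st).inv_mul_cancel_left x y,
    (isIPLoop hQ.isIPLoop hst hg₀ hg₀st).mul_inv_cancel_right x y⟩
  inner_semi _ := isSemiautomorphism_of_isInnerMapping hQ hst hg₀ hg₀st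

end Doubling

/-- The de Barros–Juriaans-type doubling of a semiautomorphic IP loop
with respect to an involutory antiautomorphism `*` with `g₀* = g₀` and `gg* ∈ Z(Q)`
is a semiautomorphic IP loop. -/
theorem stmt16 (Q : Type*) [Mul Q] [One Q] [Inv Q] (hQ : IsSAIPLoop Q)
    (g₀ : Q) (hg₀ : g₀ ∈ loopCenter Q)
    (st : Q → Q) (hanti : ∀ g h : Q, st (g * h) = st h * st g)
    (hst2 : ∀ g : Q, st (st g) = g) (hg₀st : st g₀ = g₀)
    (hZ : ∀ g : Q, g * st g ∈ loopCenter Q)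
    (f : Q ⊕ Q → Q ⊕ Q → Q ⊕ Q)
    (hf : ∀ g h : Q,
      f (.inl g) (.inl h) = .inl (g * h) ∧
      f (.inl g) (.inr h) = .inr (g * h) ∧
      f (.inr g) (.inl h) = .inr (st h * g) ∧
      f (.inr g) (.inr h) = .inl (g₀ * (g * st h))) :
    ∃ inv : Q ⊕ Q → Q ⊕ Q,
      @IsSAIPLoop (Q ⊕ Q) ⟨f⟩ ⟨Sum.inl 1⟩ ⟨inv⟩ := by
  have hf' : f = Doubling.mul' g₀ st := by
    funext x y
    rcases x with g | g <;> rcases y with h | h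
    exacts [(hf g h).1, (hf g h).2.1, (hf g h).2.2.1, (hf g h).2.2.2]
  subst hf'
  exact ⟨Doubling.inv' g₀ st, Doubling.isSAIPLoop hQ ⟨hanti, hst2, hZ⟩ hg₀ hg₀st⟩
end

section
/- Let Q be a flexible loop satisfying the ARIF identities R_x R_{y(xy)} = R_{x(yx)} R_y and L_x L_{y(xy)} = L_{x(yx)} L_y for all x,y ∈ Q, let g₀ ∈ Z(Q), and let * be an involutory antiautomorphism of Q such that g₀* = g₀ and gg* ∈ Z(Q) for every g ∈ Q. Form the doubled loop (Q ∪ Qt, ∘) using either the Chein-type multiplication (g∘h = gh, g∘(ht) = (hg)t, (gt)∘h = (gh*)t, (gt)∘(ht) = g₀h*g) or the de Barros–Juriaans-type multiplication (g∘h = gh, g∘(ht) = (gh)t, (gt)∘h = (h*g)t, (gt)∘(ht) = g₀gh*). Then (Q ∪ Qt, ∘) is a flexible loop satisfying the ARIF identities. -/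
/-!
The norms `g * st g` are central, and flexibility together with ARIF forces
`a * (st a * u) = (a * st a) * u = st a * (a * u)` and
`(u * a) * st a = u * (a * st a) = (u * st a) * a`. With these rules, once `st` is pushed through
products and the central factors `g₀` and `a * st a` are collected in front, each case of
flexibility and of the right ARIF identity in either doubled loop becomes flexibility or an ARIF
identity of `Q`. The map `g ↦ st g`, `g t ↦ g t` is an involutory antiautomorphism of both
doubled loops, and an involutory antiautomorphism of a flexible magma turns the right ARIF
identity into the left one. The loop axioms hold because every translation of a doubled loop
maps each of `Q` and `Q t` bijectively onto one of them.
-/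

open Function

def ARIFRight (M : Type*) [Mul M] : Prop :=
  ∀ x y z : M, (z * x) * (y * (x * y)) = (z * (x * (y * x))) * y

def ARIFLeft (M : Type*) [Mul M] : Prop :=
  ∀ x y z : M, (y * (x * y)) * (x * z) = y * ((x * (y * x)) * z)

theorem arifLeft_of_arifRight {M : Type*} [Mul M] (hflex : Flex M) {J : M → M}
    (hJ : ∀ a b, J (a * b) = J b * J a) (hJJ : Involutive J) (hR : ARIFRight M) :
    ARIFLeft M := by
  intro x y z
  apply hJJ.injective
  simp only [hJ]
  rw [hflex (J y), hflex (J x), hR]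

namespace IsLoop

variable {Q : Type*} [Mul Q] [One Q]

theorem mul_left_cancel (hQ : IsLoop Q) {a x y : Q} (h : a * x = a * y) : x = y :=
  (hQ.exUnique_left a (a * y)).unique h rfl

theorem mul_right_cancel (hQ : IsLoop Q) {a x y : Q} (h : x * a = y * a) : x = y :=
  (hQ.exUnique_right a (y * a)).unique h rfl

theorem bijective_mul_left (hQ : IsLoop Q) (a : Q) : Bijective (a * ·) :=
  ⟨fun _ _ => hQ.mul_left_cancel, fun b => (hQ.exUnique_left a b).exists⟩

theorem bijective_mul_right (hQ : IsLoop Q) (a : Q) : Bijective (· * a) :=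
  ⟨fun _ _ => hQ.mul_right_cancel, fun b => (hQ.exUnique_right a b).exists⟩

theorem of_bijective {M : Type*} (mul : M → M → M) (e : M) (hL : ∀ a, Bijective (mul a))
    (hR : ∀ a, Bijective (mul · a)) (he_mul : ∀ x, mul e x = x) (hmul_e : ∀ x, mul x e = x) :
    @IsLoop M ⟨mul⟩ ⟨e⟩ :=
  @IsLoop.mk M ⟨mul⟩ ⟨e⟩ (fun a => (hL a).existsUnique) (fun a => (hR a).existsUnique) he_mul
    hmul_e

end IsLoop

section Sum

variable {α : Type*} {F : α ⊕ α → α ⊕ α} {f g : α → α}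

theorem bijective_of_map_inl_inr (hf : Bijective f) (hg : Bijective g)
    (hl : ∀ x, F (.inl x) = .inl (f x)) (hr : ∀ x, F (.inr x) = .inr (g x)) : Bijective F := by
  obtain rfl : F = Sum.map f g := funext <| by rintro (x | x) <;> simp [hl, hr]
  exact hf.sumMap hg

theorem bijective_of_map_inl_inr_swap (hf : Bijective f) (hg : Bijective g)
    (hl : ∀ x, F (.inl x) = .inr (f x)) (hr : ∀ x, F (.inr x) = .inl (g x)) : Bijective F := by
  obtain rfl : F = Sum.swap ∘ Sum.map f g := funext <| by rintro (x | x) <;> simp [hl, hr]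
  exact (Equiv.sumComm α α).bijective.comp (hf.sumMap hg)

theorem Function.Involutive.sumMap {β : Type*} {f : α → α} {g : β → β} (hf : Involutive f)
    (hg : Involutive g) : Involutive (Sum.map f g) := by
  rintro (x | x)
  · simp [hf x]
  · simp [hg x]

end Sum

section CenterMul

variable {Q : Type*} [Mul Q]

/-- Multiplication by a central element, given its own head symbol so that `simp` can collect
central factors in front of a product (and sort them) without looping. -/
def centerMul (c : loopCenter Q) (x : Q) : Q := c * x

variable {c : Q}

theorem mul_eq_centerMul_left (hc : c ∈ loopCenter Q) (x : Q) : c * x = centerMul ⟨c, hc⟩ x :=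
  rfl

theorem mul_eq_centerMul_right (hc : c ∈ loopCenter Q) (x : Q) : x * c = centerMul ⟨c, hc⟩ x :=
  (hc.1 x).symm

theorem centerMul_mul (c : loopCenter Q) (x y : Q) : centerMul c x * y = centerMul c (x * y) :=
  (c.2.2.1 x y).symm

theorem mul_centerMul (c : loopCenter Q) (x y : Q) : x * centerMul c y = centerMul c (x * y) := by
  show x * (c * y) = c * (x * y)
  rw [c.2.2.2.1, ← c.2.1 x, ← c.2.2.1]

theorem centerMul_left_comm (c d : loopCenter Q) (x : Q) :
    centerMul c (centerMul d x) = centerMul d (centerMul c x) :=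
  mul_centerMul d c x

end CenterMul

section ARIF

variable {Q : Type*} [Mul Q] [One Q] {p q : Q}

theorem mul_assoc_of_mul_mem_loopCenter_left (hQ : IsLoop Q) (hflex : Flex Q)
    (hR : ARIFRight Q) (hpq : p * q ∈ loopCenter Q) (u : Q) : p * (q * u) = p * q * u := by
  obtain ⟨y, rfl, -⟩ := hQ.exUnique_right q u
  have h := hR q y p
  rw [← hflex y q, hpq.2.1 (y * q) y] at h
  exact (hQ.mul_right_cancel h).symm

theorem mul_assoc_of_mul_mem_loopCenter_right (hQ : IsLoop Q) (hflex : Flex Q)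
    (hL : ARIFLeft Q) (hpq : p * q ∈ loopCenter Q) (u : Q) : u * p * q = u * (p * q) := by
  obtain ⟨y, rfl, -⟩ := hQ.exUnique_left p u
  have h := hL p y q
  rw [← hpq.2.2.2 y (p * y), ← hflex p y] at h
  exact (hQ.mul_left_cancel h).symm

theorem mul_comm_of_mul_mem_loopCenter (hQ : IsLoop Q) (hflex : Flex Q) (hR : ARIFRight Q)
    (hpq : p * q ∈ loopCenter Q) : q * p = p * q := by
  obtain ⟨s, hs, -⟩ := hQ.exUnique_left q (p * q)
  have h := mul_assoc_of_mul_mem_loopCenter_left hQ hflex hR hpq s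
  rw [hs, ← hpq.1 p] at h
  exact (congrArg (q * ·) (hQ.mul_left_cancel h)).trans hs

end ARIF

structure IsNormedARIFLoop (Q : Type*) [Mul Q] [One Q] (st : Q → Q) : Prop where
  isLoop : IsLoop Q
  flex : Flex Q
  arifRight : ARIFRight Q
  st_mul : ∀ g h, st (g * h) = st h * st g
  st_st : ∀ g, st (st g) = g
  mul_st_mem_loopCenter : ∀ g, g * st g ∈ loopCenter Q

namespace IsNormedARIFLoop

variable {Q : Type*} [Mul Q] [One Q] {st : Q → Q}

theorem arifLeft (hN : IsNormedARIFLoop Q st) : ARIFLeft Q :=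
  arifLeft_of_arifRight hN.flex hN.st_mul hN.st_st hN.arifRight

theorem st_mul_self_comm (hN : IsNormedARIFLoop Q st) (a : Q) : st a * a = a * st a :=
  mul_comm_of_mul_mem_loopCenter hN.isLoop hN.flex hN.arifRight (hN.mul_st_mem_loopCenter a)

theorem st_mul_self_mem_loopCenter (hN : IsNormedARIFLoop Q st) (a : Q) :
    st a * a ∈ loopCenter Q :=
  hN.st_mul_self_comm a ▸ hN.mul_st_mem_loopCenter a

theorem mul_st_mul_left (hN : IsNormedARIFLoop Q st) (a u : Q) :
    a * (st a * u) = a * st a * u :=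
  mul_assoc_of_mul_mem_loopCenter_left hN.isLoop hN.flex hN.arifRight
    (hN.mul_st_mem_loopCenter a) u

theorem st_mul_mul_left (hN : IsNormedARIFLoop Q st) (a u : Q) :
    st a * (a * u) = a * st a * u := by
  rw [mul_assoc_of_mul_mem_loopCenter_left hN.isLoop hN.flex hN.arifRight
    (hN.st_mul_self_mem_loopCenter a), hN.st_mul_self_comm]

theorem mul_mul_st_right (hN : IsNormedARIFLoop Q st) (a u : Q) :
    u * a * st a = u * (a * st a) :=
  mul_assoc_of_mul_mem_loopCenter_right hN.isLoop hN.flex hN.arifLeft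
    (hN.mul_st_mem_loopCenter a) u

theorem mul_st_mul_right (hN : IsNormedARIFLoop Q st) (a u : Q) :
    u * st a * a = u * (a * st a) := by
  rw [mul_assoc_of_mul_mem_loopCenter_right hN.isLoop hN.flex hN.arifLeft
    (hN.st_mul_self_mem_loopCenter a), hN.st_mul_self_comm]

theorem st_centerMul (hN : IsNormedARIFLoop Q st) (c : loopCenter Q) (x : Q) :
    st (centerMul c x) = st x * st c :=
  hN.st_mul c x

theorem st_one (hN : IsNormedARIFLoop Q st) : st 1 = 1 := by
  apply hN.isLoop.mul_left_cancel (a := st 1)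
  rw [← hN.st_mul, hN.isLoop.one_mul, hN.isLoop.mul_one]

end IsNormedARIFLoop

def IsFlexibleARIFLoop (M : Type*) [Mul M] [One M] : Prop :=
  IsLoop M ∧ Flex M ∧ ARIFRight M ∧ ARIFLeft M

theorem IsFlexibleARIFLoop.of_antiInvolution {M : Type*} [Mul M] [One M] (hM : IsLoop M)
    (hflex : Flex M) (hR : ARIFRight M) {J : M → M} (hJ : ∀ a b, J (a * b) = J b * J a)
    (hJJ : Involutive J) : IsFlexibleARIFLoop M :=
  ⟨hM, hflex, hR, arifLeft_of_arifRight hflex hJ hJJ hR⟩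

section Doubling

variable {Q : Type*} [Mul Q] [One Q]

def cheinDouble (g₀ : Q) (st : Q → Q) : Q ⊕ Q → Q ⊕ Q → Q ⊕ Q
  | .inl g, .inl h => .inl (g * h)
  | .inl g, .inr h => .inr (h * g)
  | .inr g, .inl h => .inr (g * st h)
  | .inr g, .inr h => .inl (g₀ * (st h * g))

def barrosJuriaansDouble (g₀ : Q) (st : Q → Q) : Q ⊕ Q → Q ⊕ Q → Q ⊕ Q
  | .inl g, .inl h => .inl (g * h)
  | .inl g, .inr h => .inr (g * h)
  | .inr g, .inl h => .inr (st h * g)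
  | .inr g, .inr h => .inl (g₀ * (g * st h))

variable {g₀ : Q} {st : Q → Q}

local infixl:70 " ⋆ " => cheinDouble g₀ st
local infixl:70 " ⋄ " => barrosJuriaansDouble g₀ st

theorem isLoop_cheinDouble (hN : IsNormedARIFLoop Q st) :
    @IsLoop (Q ⊕ Q) ⟨cheinDouble g₀ st⟩ ⟨.inl 1⟩ := by
  have hQ := hN.isLoop
  have hst := Involutive.bijective hN.st_st
  refine IsLoop.of_bijective _ _ ?_ ?_ ?_ ?_
  · rintro (g | g)
    · exact bijective_of_map_inl_inr (hQ.bijective_mul_left g) (hQ.bijective_mul_right g)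
        (fun _ => rfl) (fun _ => rfl)
    · exact bijective_of_map_inl_inr_swap ((hQ.bijective_mul_left g).comp hst)
        ((hQ.bijective_mul_left g₀).comp ((hQ.bijective_mul_right g).comp hst))
        (fun _ => rfl) (fun _ => rfl)
  · rintro (g | g)
    · exact bijective_of_map_inl_inr (hQ.bijective_mul_right g) (hQ.bijective_mul_right (st g))
        (fun _ => rfl) (fun _ => rfl)
    · exact bijective_of_map_inl_inr_swap (hQ.bijective_mul_left g)
        ((hQ.bijective_mul_left g₀).comp (hQ.bijective_mul_left (st g)))
        (fun _ => rfl) (fun _ => rfl)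
  · rintro (g | g) <;> simp [cheinDouble, hQ.one_mul, hQ.mul_one]
  · rintro (g | g) <;> simp [cheinDouble, hQ.mul_one, hN.st_one]

theorem sumMap_st_cheinDouble (hN : IsNormedARIFLoop Q st) (hg₀ : g₀ ∈ loopCenter Q)
    (hg₀st : st g₀ = g₀) (x y : Q ⊕ Q) :
    Sum.map st id (x ⋆ y) = Sum.map st id y ⋆ Sum.map st id x := by
  rcases x with a | a <;> rcases y with b | b <;>
    simp only [cheinDouble, Sum.map_inl, Sum.map_inr, id, hN.st_mul, hN.st_st, hg₀st,
      mul_eq_centerMul_left, mul_eq_centerMul_right, hN.st_centerMul, hg₀]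

theorem flex_cheinDouble (hN : IsNormedARIFLoop Q st) (hg₀ : g₀ ∈ loopCenter Q)
    (hg₀st : st g₀ = g₀) : ∀ x y : Q ⊕ Q, x ⋆ y ⋆ x = x ⋆ (y ⋆ x) := by
  rintro (a | a) (b | b) <;>
    simp only [cheinDouble, hN.st_mul, hN.st_st, hg₀st, hN.st_mul_mul_left,
      hN.mul_mul_st_right, hN.mul_st_mul_right, mul_eq_centerMul_left, mul_eq_centerMul_right,
      mul_centerMul, hN.st_centerMul, hg₀, hN.mul_st_mem_loopCenter, hN.flex _ _]

theorem arifRight_cheinDouble (hN : IsNormedARIFLoop Q st) (hg₀ : g₀ ∈ loopCenter Q)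
    (hg₀st : st g₀ = g₀) : ∀ x y z : Q ⊕ Q, z ⋆ x ⋆ (y ⋆ (x ⋆ y)) = z ⋆ (x ⋆ (y ⋆ x)) ⋆ y := by
  rintro (a | a) (b | b) (u | u) <;>
    simp only [cheinDouble, hN.st_mul, hN.st_st, hg₀st, hN.mul_st_mul_left, hN.st_mul_mul_left,
      hN.mul_mul_st_right, hN.mul_st_mul_right, mul_eq_centerMul_left, mul_eq_centerMul_right,
      centerMul_mul, mul_centerMul, centerMul_left_comm, hN.st_centerMul, hg₀,
      hN.mul_st_mem_loopCenter, hN.flex _ _, hN.arifRight _ _ _, hN.arifLeft _ _ _]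

theorem isFlexibleARIFLoop_cheinDouble (hN : IsNormedARIFLoop Q st) (hg₀ : g₀ ∈ loopCenter Q)
    (hg₀st : st g₀ = g₀) : @IsFlexibleARIFLoop (Q ⊕ Q) ⟨cheinDouble g₀ st⟩ ⟨.inl 1⟩ :=
  @IsFlexibleARIFLoop.of_antiInvolution _ ⟨cheinDouble g₀ st⟩ ⟨.inl 1⟩ (isLoop_cheinDouble hN)
    (flex_cheinDouble hN hg₀ hg₀st) (arifRight_cheinDouble hN hg₀ hg₀st) _
    (sumMap_st_cheinDouble hN hg₀ hg₀st) (Involutive.sumMap hN.st_st fun _ => rfl)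

theorem isLoop_barrosJuriaansDouble (hN : IsNormedARIFLoop Q st) :
    @IsLoop (Q ⊕ Q) ⟨barrosJuriaansDouble g₀ st⟩ ⟨.inl 1⟩ := by
  have hQ := hN.isLoop
  have hst := Involutive.bijective hN.st_st
  refine IsLoop.of_bijective _ _ ?_ ?_ ?_ ?_
  · rintro (g | g)
    · exact bijective_of_map_inl_inr (hQ.bijective_mul_left g) (hQ.bijective_mul_left g)
        (fun _ => rfl) (fun _ => rfl)
    · exact bijective_of_map_inl_inr_swap ((hQ.bijective_mul_right g).comp hst)
        ((hQ.bijective_mul_left g₀).comp ((hQ.bijective_mul_left g).comp hst))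
        (fun _ => rfl) (fun _ => rfl)
  · rintro (g | g)
    · exact bijective_of_map_inl_inr (hQ.bijective_mul_right g) (hQ.bijective_mul_left (st g))
        (fun _ => rfl) (fun _ => rfl)
    · exact bijective_of_map_inl_inr_swap (hQ.bijective_mul_right g)
        ((hQ.bijective_mul_left g₀).comp (hQ.bijective_mul_right (st g)))
        (fun _ => rfl) (fun _ => rfl)
  · rintro (g | g) <;> simp [barrosJuriaansDouble, hQ.one_mul]
  · rintro (g | g) <;> simp [barrosJuriaansDouble, hQ.mul_one, hQ.one_mul, hN.st_one]

theorem sumMap_st_barrosJuriaansDouble (hN : IsNormedARIFLoop Q st) (hg₀ : g₀ ∈ loopCenter Q)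
    (hg₀st : st g₀ = g₀) (x y : Q ⊕ Q) :
    Sum.map st id (x ⋄ y) = Sum.map st id y ⋄ Sum.map st id x := by
  rcases x with a | a <;> rcases y with b | b <;>
    simp only [barrosJuriaansDouble, Sum.map_inl, Sum.map_inr, id, hN.st_mul, hN.st_st, hg₀st,
      mul_eq_centerMul_left, mul_eq_centerMul_right, hN.st_centerMul, hg₀]

theorem flex_barrosJuriaansDouble (hN : IsNormedARIFLoop Q st) (hg₀ : g₀ ∈ loopCenter Q)
    (hg₀st : st g₀ = g₀) : ∀ x y : Q ⊕ Q, x ⋄ y ⋄ x = x ⋄ (y ⋄ x) := by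
  rintro (a | a) (b | b) <;>
    simp only [barrosJuriaansDouble, hN.st_mul, hN.st_st, hg₀st, hN.mul_st_mul_left,
      hN.st_mul_mul_left, hN.mul_mul_st_right, mul_eq_centerMul_left, mul_eq_centerMul_right,
      centerMul_mul, hN.st_centerMul, hg₀, hN.mul_st_mem_loopCenter, hN.flex _ _]

theorem arifRight_barrosJuriaansDouble (hN : IsNormedARIFLoop Q st) (hg₀ : g₀ ∈ loopCenter Q)
    (hg₀st : st g₀ = g₀) : ∀ x y z : Q ⊕ Q, z ⋄ x ⋄ (y ⋄ (x ⋄ y)) = z ⋄ (x ⋄ (y ⋄ x)) ⋄ y := by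
  rintro (a | a) (b | b) (u | u) <;>
    simp only [barrosJuriaansDouble, hN.st_mul, hN.st_st, hg₀st, hN.mul_st_mul_left,
      hN.st_mul_mul_left, hN.mul_mul_st_right, hN.mul_st_mul_right, mul_eq_centerMul_left,
      mul_eq_centerMul_right, centerMul_mul, mul_centerMul, centerMul_left_comm, hN.st_centerMul,
      hg₀, hN.mul_st_mem_loopCenter, hN.flex _ _, hN.arifRight _ _ _, hN.arifLeft _ _ _]

theorem isFlexibleARIFLoop_barrosJuriaansDouble (hN : IsNormedARIFLoop Q st)
    (hg₀ : g₀ ∈ loopCenter Q) (hg₀st : st g₀ = g₀) :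
    @IsFlexibleARIFLoop (Q ⊕ Q) ⟨barrosJuriaansDouble g₀ st⟩ ⟨.inl 1⟩ :=
  @IsFlexibleARIFLoop.of_antiInvolution _ ⟨barrosJuriaansDouble g₀ st⟩ ⟨.inl 1⟩
    (isLoop_barrosJuriaansDouble hN) (flex_barrosJuriaansDouble hN hg₀ hg₀st)
    (arifRight_barrosJuriaansDouble hN hg₀ hg₀st) _ (sumMap_st_barrosJuriaansDouble hN hg₀ hg₀st)
    (Involutive.sumMap hN.st_st fun _ => rfl)

end Doubling

theorem stmt19_general (Q : Type*) [Mul Q] [One Q] (hQ : IsLoop Q) (hflex : Flex Q)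
    (hARIFR : ∀ x y z : Q, (z * x) * (y * (x * y)) = (z * (x * (y * x))) * y)
    (g₀ : Q) (hg₀ : g₀ ∈ loopCenter Q)
    (st : Q → Q) (hanti : ∀ g h : Q, st (g * h) = st h * st g)
    (hst2 : ∀ g : Q, st (st g) = g) (hg₀st : st g₀ = g₀)
    (hZ : ∀ g : Q, g * st g ∈ loopCenter Q)
    (mulC mulD : Q ⊕ Q → Q ⊕ Q → Q ⊕ Q)
    (hC : ∀ g h : Q,
      mulC (.inl g) (.inl h) = .inl (g * h) ∧
      mulC (.inl g) (.inr h) = .inr (h * g) ∧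
      mulC (.inr g) (.inl h) = .inr (g * st h) ∧
      mulC (.inr g) (.inr h) = .inl (g₀ * (st h * g)))
    (hD : ∀ g h : Q,
      mulD (.inl g) (.inl h) = .inl (g * h) ∧
      mulD (.inl g) (.inr h) = .inr (g * h) ∧
      mulD (.inr g) (.inl h) = .inr (st h * g) ∧
      mulD (.inr g) (.inr h) = .inl (g₀ * (g * st h))) :
    (@IsLoop (Q ⊕ Q) ⟨mulC⟩ ⟨Sum.inl 1⟩ ∧
      (∀ x y : Q ⊕ Q, mulC (mulC x y) x = mulC x (mulC y x)) ∧
      (∀ x y z : Q ⊕ Q,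
        mulC (mulC z x) (mulC y (mulC x y)) = mulC (mulC z (mulC x (mulC y x))) y) ∧
      (∀ x y z : Q ⊕ Q,
        mulC (mulC y (mulC x y)) (mulC x z) = mulC y (mulC (mulC x (mulC y x)) z))) ∧
    (@IsLoop (Q ⊕ Q) ⟨mulD⟩ ⟨Sum.inl 1⟩ ∧
      (∀ x y : Q ⊕ Q, mulD (mulD x y) x = mulD x (mulD y x)) ∧
      (∀ x y z : Q ⊕ Q,
        mulD (mulD z x) (mulD y (mulD x y)) = mulD (mulD z (mulD x (mulD y x))) y) ∧
      (∀ x y z : Q ⊕ Q,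
        mulD (mulD y (mulD x y)) (mulD x z) = mulD y (mulD (mulD x (mulD y x)) z))) := by
  have hN : IsNormedARIFLoop Q st := ⟨hQ, hflex, hARIFR, hanti, hst2, hZ⟩
  obtain rfl : mulC = cheinDouble g₀ st := by
    funext x y
    cases x <;> cases y <;> simp [cheinDouble, hC]
  obtain rfl : mulD = barrosJuriaansDouble g₀ st := by
    funext x y
    cases x <;> cases y <;> simp [barrosJuriaansDouble, hD]
  exact ⟨isFlexibleARIFLoop_cheinDouble hN hg₀ hg₀st,
    isFlexibleARIFLoop_barrosJuriaansDouble hN hg₀ hg₀st⟩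

/-- Either doubling of a flexible ARIF loop is a flexible loop
satisfying the ARIF identities. -/
theorem stmt19 (Q : Type*) [Mul Q] [One Q] (hQ : IsLoop Q) (hflex : Flex Q)
    (hARIFR : ∀ x y z : Q, (z * x) * (y * (x * y)) = (z * (x * (y * x))) * y)
    (hARIFL : ∀ x y z : Q, (y * (x * y)) * (x * z) = y * ((x * (y * x)) * z))
    (g₀ : Q) (hg₀ : g₀ ∈ loopCenter Q)
    (st : Q → Q) (hanti : ∀ g h : Q, st (g * h) = st h * st g)
    (hst2 : ∀ g : Q, st (st g) = g) (hg₀st : st g₀ = g₀)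
    (hZ : ∀ g : Q, g * st g ∈ loopCenter Q)
    (mulC mulD : Q ⊕ Q → Q ⊕ Q → Q ⊕ Q)
    (hC : ∀ g h : Q,
      mulC (.inl g) (.inl h) = .inl (g * h) ∧
      mulC (.inl g) (.inr h) = .inr (h * g) ∧
      mulC (.inr g) (.inl h) = .inr (g * st h) ∧
      mulC (.inr g) (.inr h) = .inl (g₀ * (st h * g)))
    (hD : ∀ g h : Q,
      mulD (.inl g) (.inl h) = .inl (g * h) ∧
      mulD (.inl g) (.inr h) = .inr (g * h) ∧
      mulD (.inr g) (.inl h) = .inr (st h * g) ∧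
      mulD (.inr g) (.inr h) = .inl (g₀ * (g * st h))) :
    (@IsLoop (Q ⊕ Q) ⟨mulC⟩ ⟨Sum.inl 1⟩ ∧
      (∀ x y : Q ⊕ Q, mulC (mulC x y) x = mulC x (mulC y x)) ∧
      (∀ x y z : Q ⊕ Q,
        mulC (mulC z x) (mulC y (mulC x y)) = mulC (mulC z (mulC x (mulC y x))) y) ∧
      (∀ x y z : Q ⊕ Q,
        mulC (mulC y (mulC x y)) (mulC x z) = mulC y (mulC (mulC x (mulC y x)) z))) ∧
    (@IsLoop (Q ⊕ Q) ⟨mulD⟩ ⟨Sum.inl 1⟩ ∧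
      (∀ x y : Q ⊕ Q, mulD (mulD x y) x = mulD x (mulD y x)) ∧
      (∀ x y z : Q ⊕ Q,
        mulD (mulD z x) (mulD y (mulD x y)) = mulD (mulD z (mulD x (mulD y x))) y) ∧
      (∀ x y z : Q ⊕ Q,
        mulD (mulD y (mulD x y)) (mulD x z) = mulD y (mulD (mulD x (mulD y x)) z))) :=
  stmt19_general Q hQ hflex hARIFR g₀ hg₀ st hanti hst2 hg₀st hZ mulC mulD hC hD
end
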